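/- For every nonnegative integer n: ∑_{k=0}^n C(n,k)^3 · {1 + 3(n−2k)H_k} = (−1)^n, i.e. T_n^{(3)} = (−1)^n. -/

import Mathlib

noncomputable def H (m : ℕ) : ℚ := ∑ j ∈ Finset.range m, (1 : ℚ) / (j + 1)

/-!
Creative telescoping. With `F n k = C(n,k)^3 (1 + 3(n-2k)H_k)` there is a certificate `G`,
a rational multiple of `C(n+2,k)^3` that is affine in `H_k`, such that
`(n+1) F n k + (2n+3) F (n+1) k + (n+2) F (n+2) k = G n (k+1) - G n k`.
Summing over `k` shows that `T_n = ∑_k F n k` satisfies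
`(n+1) T_n + (2n+3) T_{n+1} + (n+2) T_{n+2} = 0`, a recurrence also satisfied by `(-1)^n`;
since `T_0 = 1` and `T_1 = -1`, the two sequences agree.
-/

open Finset

theorem Nat.cast_choose_mul_succ_eq {R : Type*} [CommRing R] (n k : ℕ) :
    (n.choose k : R) * (n + 1) = ((n + 1).choose k : R) * (n + 1 - k) := by
  rcases le_or_gt k (n + 1) with h | h
  · have := congrArg (Nat.cast : ℕ → R) (Nat.choose_mul_succ_eq n k)
    push_cast [Nat.cast_sub h] at this
    exact this
  · simp [Nat.choose_eq_zero_of_lt h, Nat.choose_eq_zero_of_lt (by omega : n < k)]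

theorem Nat.cast_choose_succ_right_eq {R : Type*} [CommRing R] (n k : ℕ) :
    (n.choose (k + 1) : R) * (k + 1) = (n.choose k : R) * (n - k) := by
  rcases le_or_gt k n with h | h
  · have := congrArg (Nat.cast : ℕ → R) (Nat.choose_succ_right_eq n k)
    push_cast [Nat.cast_sub h] at this
    exact this
  · simp [Nat.choose_eq_zero_of_lt h, Nat.choose_eq_zero_of_lt (by omega : n < k + 1)]

theorem eq_of_three_term_recurrence {R : Type*} [CommRing R] [IsDomain R] {a b c u v : ℕ → R}
    (hc : ∀ n, c n ≠ 0) (hu : ∀ n, a n * u n + b n * u (n + 1) + c n * u (n + 2) = 0)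
    (hv : ∀ n, a n * v n + b n * v (n + 1) + c n * v (n + 2) = 0)
    (h₀ : u 0 = v 0) (h₁ : u 1 = v 1) : u = v := by
  funext n
  induction n using Nat.twoStepInduction with
  | zero => exact h₀
  | one => exact h₁
  | more n ih₀ ih₁ =>
    exact mul_left_cancel₀ (hc n) (by linear_combination hu n - hv n - a n * ih₀ - b n * ih₁)

theorem H_succ (k : ℕ) : H (k + 1) = H k + 1 / (k + 1) := by
  simp [H, sum_range_succ]

namespace PauleSchneider

/-- Here `c` stands for `C(n,k)` and `h` for `H_k`. -/
def summand (n k c h : ℚ) : ℚ := c ^ 3 * (1 + 3 * (n - 2 * k) * h)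

-- Certificate polynomials found by a creative-telescoping computation.
def certP (n k : ℚ) : ℚ :=
  (-72)*k^2 + (-112)*k^3 + 33*k^4 + 69*k^5 + (-33)*k^6 + (-15)*k^7 + 12*k^8 + (-2)*k^9
  + n * ((-264)*k^2 + (-480)*k^3 + (-3)*k^4 + 261*k^5 + (-41)*k^6 + (-63)*k^7 + 24*k^8
    + (-2)*k^9)
  + n^2 * ((-378)*k^2 + (-792)*k^3 + (-219)*k^4 + 327*k^5 + 45*k^6 + (-75)*k^7 + 12*k^8)
  + n^3 * ((-264)*k^2 + (-630)*k^3 + (-333)*k^4 + 141*k^5 + 81*k^6 + (-27)*k^7)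
  + n^4 * ((-90)*k^2 + (-242)*k^3 + (-186)*k^4 + (-6)*k^5 + 28*k^6)
  + n^5 * ((-12)*k^2 + (-36)*k^3 + (-36)*k^4 + (-12)*k^5)

def certQ (n k : ℚ) : ℚ :=
  72*k^3 + (-102)*k^4 + 72*k^5 + (-24)*k^6 + 3*k^7
  + n * (264*k^3 + (-297)*k^4 + 162*k^5 + (-39)*k^6 + 3*k^7)
  + n^2 * (378*k^3 + (-315)*k^4 + 117*k^5 + (-15)*k^6)
  + n^3 * (264*k^3 + (-144)*k^4 + 27*k^5)
  + n^4 * (90*k^3 + (-24)*k^4)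
  + n^5 * 12*k^3

/-- Here `c` stands for `C(n+2,k)` and `h` for `H_k`. -/
def cert (n k c h : ℚ) : ℚ :=
  c ^ 3 * (certP n k / ((k + 1) ^ 3 * (n + 1) ^ 3 * (n + 2) ^ 3)
    + certQ n k * h / ((n + 1) ^ 3 * (n + 2) ^ 3))

set_option maxRecDepth 2000 in
/-- `C(n,k)`, `C(n+1,k)`, `C(n+2,k+1)` appear as rational multiples of `c = C(n+2,k)`,
and `H_{k+1}` as `h + 1/(k+1)`. -/
theorem summand_recurrence_eq_cert_sub (n k c h : ℚ) (hn : 0 ≤ n) (hk : 0 ≤ k) :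
    (n + 1) * summand n k (c * ((n + 1 - k) * (n + 2 - k)) / ((n + 1) * (n + 2))) h
      + (2 * n + 3) * summand (n + 1) k (c * (n + 2 - k) / (n + 2)) h
      + (n + 2) * summand (n + 2) k c h
      = cert n (k + 1) (c * (n + 2 - k) / (k + 1)) (h + 1 / (k + 1)) - cert n k c h := by
  have : n + 1 ≠ 0 := by positivity
  have : n + 2 ≠ 0 := by positivity
  have : k + 1 ≠ 0 := by positivity
  have : k + 1 + 1 ≠ 0 := by positivity
  unfold summand cert
  field_simp
  unfold certP certQ
  ring

noncomputable def F (n k : ℕ) : ℚ := summand n k (n.choose k) (H k)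

noncomputable def G (n k : ℕ) : ℚ := cert n k ((n + 2).choose k) (H k)

noncomputable def T (n : ℕ) : ℚ := ∑ k ∈ range (n + 1), F n k

theorem F_recurrence (n k : ℕ) :
    (n + 1) * F n k + (2 * n + 3) * F (n + 1) k + (n + 2) * F (n + 2) k = G n (k + 1) - G n k := by
  have h₀ := Nat.cast_choose_mul_succ_eq (R := ℚ) n k
  have h₁ := Nat.cast_choose_mul_succ_eq (R := ℚ) (n + 1) k
  have h₂ := Nat.cast_choose_succ_right_eq (R := ℚ) (n + 2) k
  push_cast at h₁ h₂
  have ha : (n.choose k : ℚ) =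
      (n + 2).choose k * ((n + 1 - k) * (n + 2 - k)) / ((n + 1) * (n + 2)) := by
    rw [eq_div_iff (by positivity)]
    linear_combination (n + 2 : ℚ) * h₀ + (n + 1 - k : ℚ) * h₁
  have hb : ((n + 1).choose k : ℚ) = (n + 2).choose k * (n + 2 - k) / (n + 2) := by
    rw [eq_div_iff (by positivity)]
    linear_combination h₁
  have hd : ((n + 2).choose (k + 1) : ℚ) = (n + 2).choose k * (n + 2 - k) / (k + 1) := by
    rw [eq_div_iff (by positivity)]
    linear_combination h₂
  simp only [F, G, H_succ]
  push_cast
  rw [ha, hb, hd]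
  exact summand_recurrence_eq_cert_sub n k _ _ (by positivity) (by positivity)

theorem F_eq_zero_of_lt {n k : ℕ} (h : n < k) : F n k = 0 := by
  simp [F, summand, Nat.choose_eq_zero_of_lt h]

theorem T_eq_sum_range {n m : ℕ} (h : n + 1 ≤ m) : T n = ∑ k ∈ range m, F n k :=
  sum_subset (range_subset_range.2 h) fun k _ hk ↦
    F_eq_zero_of_lt (by simp only [mem_range, not_lt] at hk; omega)

theorem G_zero_right (n : ℕ) : G n 0 = 0 := by
  simp [G, cert, certP, H]

theorem G_self_add_three (n : ℕ) : G n (n + 3) = 0 := by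
  simp [G, cert]

theorem T_recurrence (n : ℕ) :
    (n + 1) * T n + (2 * n + 3) * T (n + 1) + (n + 2) * T (n + 2) = 0 := by
  rw [T_eq_sum_range (m := n + 3) (by omega), T_eq_sum_range (m := n + 3) (by omega),
    T_eq_sum_range (m := n + 3) le_rfl, mul_sum, mul_sum, mul_sum, ← sum_add_distrib,
    ← sum_add_distrib]
  simp only [F_recurrence, sum_range_sub (G n), G_self_add_three, G_zero_right, sub_zero]

theorem T_eq_neg_one_pow : T = fun n ↦ (-1) ^ n :=
  eq_of_three_term_recurrence (a := fun n ↦ (n + 1 : ℚ)) (b := fun n ↦ 2 * n + 3)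
    (c := fun n ↦ n + 2) (fun n ↦ by positivity) T_recurrence
    (fun n ↦ by ring) (by simp [T, F, summand, H])
    (by norm_num [T, F, summand, H, sum_range_succ])

end PauleSchneider

theorem paule_schneider_three (n : ℕ) :
    ∑ k ∈ Finset.range (n + 1),
      ((n.choose k : ℚ))^(3 : ℕ) * (1 + (3) * ((n : ℚ) - 2*k) * H k) =
      (-1)^n :=
  congrFun PauleSchneider.T_eq_neg_one_pow n
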